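/- arXiv:2303.17663 — 11 statements merged into one kernel-verified Lean document; each statement's English description precedes it below -/
import Mathlib

section
/- Let A be a symmetric bilinear form on an n-dimensional Euclidean space with orthonormal eigenbasis e_1,...,e_n and eigenvalues λ_1,...,λ_n. For R = A ⊙∧ id and each p, R(e_p ⊙ e_p) = 2λ_p (e_p ⊙ e_p) − 2λ_p g − Σ_{i=1}^n λ_i e_i ⊙ e_i, where g is the metric (identity matrix). -/
open Finset

/-- The Kulkarni–Nomizu product `A ⊙∧ id`, acting on two-tensors `φ` by
`(Rφ)_{il} = Σ_{j,k} (A_{ik}δ_{jl} + A_{jl}δ_{ik} − A_{jk}δ_{il} − A_{il}δ_{jk}) φ_{jk}`. -/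
noncomputable def KNid {n : ℕ} (A φ : Matrix (Fin n) (Fin n) ℝ) :
    Matrix (Fin n) (Fin n) ℝ :=
  fun i l => ∑ j : Fin n, ∑ k : Fin n,
    (A i k * (if j = l then (1:ℝ) else 0) + A j l * (if i = k then (1:ℝ) else 0)
      - A j k * (if i = l then (1:ℝ) else 0) - A i l * (if j = k then (1:ℝ) else 0)) * φ j k

/-- The symmetric product `u ⊙ v = u ⊗ v + v ⊗ u` as a matrix. -/
noncomputable def symProd {n : ℕ} (u v : Fin n → ℝ) : Matrix (Fin n) (Fin n) ℝ :=
  fun i j => u i * v j + v i * u j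

/-!
Expanding the Kulkarni–Nomizu product gives `Rφ = A φᵀ + φᵀ A − ⟨A, φ⟩ g − (tr φ) A`. For the unit
eigenvector `e_p`, `φ = e_p ⊙ e_p = 2 e_p e_pᵀ` gives `A φ = φ A = λ_p φ`, `⟨A, φ⟩ = 2λ_p` and
`tr φ = 2`. The last term is rewritten by the spectral decomposition `A = Σ λ_i e_i e_iᵀ`, which
holds because the rows of an orthogonal matrix are also its orthonormal columns, and which in
particular makes `A` symmetric, as needed for `φ A = λ_p φ`.
-/

open Matrix

theorem KNid_eq {n : ℕ} (A φ : Matrix (Fin n) (Fin n) ℝ) :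
    KNid A φ = A * φᵀ + φᵀ * A - (Aᵀ * φ).trace • 1 - φ.trace • A := by
  ext i l
  simp only [KNid, add_mul, sub_mul, sum_sub_distrib, sum_add_distrib, Matrix.sub_apply,
    Matrix.add_apply, mul_apply, Matrix.smul_apply, one_apply, trace, transpose_apply, diag_apply,
    smul_eq_mul, mul_ite, mul_one, mul_zero, ite_mul, zero_mul, sum_ite_irrel, sum_const_zero,
    sum_ite_eq', mem_univ, if_true, sum_ite_eq, mul_comm (φ _ _), sum_mul]
  rw [Finset.sum_comm]

theorem symProd_self {n : ℕ} (u : Fin n → ℝ) : symProd u u = (2 : ℝ) • vecMulVec u u := by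
  ext i j
  simp [symProd, vecMulVec_apply]
  ring

theorem KNid_symProd_self {n : ℕ} {A : Matrix (Fin n) (Fin n) ℝ} (hA : Aᵀ = A) {u : Fin n → ℝ}
    {μ : ℝ} (hu : u ⬝ᵥ u = 1) (hAu : A *ᵥ u = μ • u) :
    KNid A (symProd u u) = (2 * μ) • symProd u u - (2 * μ) • 1 - (2 : ℝ) • A := by
  have huA : u ᵥ* A = μ • u := by rw [← mulVec_transpose, hA, hAu]
  rw [KNid_eq, symProd_self]
  simp only [transpose_smul, transpose_vecMulVec, Algebra.mul_smul_comm, mul_vecMulVec, hAu,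
    smul_vecMulVec, Algebra.smul_mul_assoc, vecMulVec_mul, huA, vecMulVec_smul, hA, trace_smul,
    trace_vecMulVec, hu, smul_eq_mul, mul_one, sub_left_inj]
  module

theorem Matrix.sum_vecMulVec_self_eq_one_of_orthonormal {ι R : Type*} [Fintype ι]
    [DecidableEq ι] [CommRing R] {e : ι → ι → R}
    (horth : ∀ p q, e p ⬝ᵥ e q = if p = q then 1 else 0) :
    ∑ q, vecMulVec (e q) (e q) = 1 := by
  have hrows : of e * (of e)ᵀ = 1 := by
    ext p q
    exact horth p q
  have hcols : (of e)ᵀ * of e = 1 := mul_eq_one_comm.mp hrows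
  ext i l
  simpa [sum_apply, vecMulVec_apply, mul_apply] using congrFun (congrFun hcols i) l

theorem Matrix.eq_sum_smul_vecMulVec_of_orthonormal {ι R : Type*} [Fintype ι] [DecidableEq ι]
    [CommRing R] {A : Matrix ι ι R} {e : ι → ι → R} {lam : ι → R}
    (horth : ∀ p q, e p ⬝ᵥ e q = if p = q then 1 else 0)
    (heig : ∀ p, A *ᵥ e p = lam p • e p) :
    A = ∑ q, lam q • vecMulVec (e q) (e q) := by
  calc A = A * ∑ q, vecMulVec (e q) (e q) := by
        rw [sum_vecMulVec_self_eq_one_of_orthonormal horth, mul_one]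
    _ = ∑ q, lam q • vecMulVec (e q) (e q) := by
        simp [Finset.mul_sum, mul_vecMulVec, heig, smul_vecMulVec]

theorem stmt1_general {n : ℕ} (A : Matrix (Fin n) (Fin n) ℝ)
    (e : Fin n → Fin n → ℝ) (lam : Fin n → ℝ)
    (horth : ∀ p q : Fin n, ∑ i : Fin n, e p i * e q i = if p = q then (1:ℝ) else 0)
    (heig : ∀ p : Fin n, A.mulVec (e p) = lam p • e p)
    (p : Fin n) :
    KNid A (symProd (e p) (e p)) =
      (2 * lam p) • symProd (e p) (e p) - (2 * lam p) • (1 : Matrix (Fin n) (Fin n) ℝ)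
        - ∑ i : Fin n, lam i • symProd (e i) (e i) := by
  have hspec := eq_sum_smul_vecMulVec_of_orthonormal horth heig
  have hsymm : Aᵀ = A := by
    rw [hspec]
    simp [transpose_sum, transpose_vecMulVec]
  rw [KNid_symProd_self hsymm ((horth p p).trans (if_pos rfl)) (heig p)]
  nth_rewrite 1 [hspec]
  simp [symProd_self, Finset.smul_sum, smul_smul, mul_comm]

theorem stmt1 {n : ℕ} (A : Matrix (Fin n) (Fin n) ℝ) (hA : A.IsSymm)
    (e : Fin n → Fin n → ℝ) (lam : Fin n → ℝ)
    (horth : ∀ p q : Fin n, ∑ i : Fin n, e p i * e q i = if p = q then (1:ℝ) else 0)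
    (heig : ∀ p : Fin n, A.mulVec (e p) = lam p • e p)
    (p : Fin n) :
    KNid A (symProd (e p) (e p)) =
      (2 * lam p) • symProd (e p) (e p) - (2 * lam p) • (1 : Matrix (Fin n) (Fin n) ℝ)
        - ∑ i : Fin n, lam i • symProd (e i) (e i) :=
  stmt1_general A e lam horth heig p
end

section
/- Let A be a symmetric bilinear form on an n-dimensional Euclidean space with orthonormal eigenbasis e_1,...,e_n and eigenvalues λ_1,...,λ_n. Suppose real numbers c_1,...,c_n (not all zero) and λ satisfy Σ_p c_p = 0 and 2λ_p c_p − (2/n) Σ_q c_q λ_q = λ c_p for all p. Then the tensor Σ_p c_p e_p ⊙ e_p is a nonzero trace-free symmetric two-tensor and (π ∘ (A ⊙∧ id))(Σ_p c_p e_p ⊙ e_p) = λ Σ_p c_p e_p ⊙ e_p, where π is the orthogonal projection from symmetric two-tensors to trace-free symmetric two-tensors. -/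
/-!
Let `U` be the orthogonal matrix with rows `e p`. Then `φ = ∑ p, c p • e p ⊙ e p` is
`Uᵀ * diagonal (2 c) * U`, and since `U` diagonalises `A`, the Kulkarni–Nomizu product of `A`
with any `Uᵀ * diagonal d * U` is `Uᵀ * diagonal (2 λ d) * U`, plus a multiple of `g`, minus
`(∑ d) • A`. For `d = 2 c` the last term vanishes since `∑ c = 0`, `π` removes the multiple of
`g`, and projecting the diagonal part leaves the diagonal `4 λ_p c_p - (4 / n) ∑ c_q λ_q`, which
is `2 λE c_p` by hypothesis: the image is `λE • φ`.
-/

open Finset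

/-- Orthogonal projection onto trace-free symmetric two-tensors:
`π(φ) = φ − (tr φ / n) g`. -/
noncomputable def tracefreeProj {n : ℕ} (φ : Matrix (Fin n) (Fin n) ℝ) :
    Matrix (Fin n) (Fin n) ℝ :=
  φ - (φ.trace / n) • (1 : Matrix (Fin n) (Fin n) ℝ)

open Matrix

namespace Matrix

variable {ι R : Type*} [Fintype ι] [DecidableEq ι] [CommRing R] {U : Matrix ι ι R}

theorem isSymm_transpose_mul_diagonal_mul (U : Matrix ι ι R) (d : ι → R) :
    (Uᵀ * diagonal d * U).IsSymm := by
  simp [IsSymm, transpose_mul, mul_assoc]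

theorem trace_transpose_mul_diagonal_mul (hU : U * Uᵀ = 1) (d : ι → R) :
    (Uᵀ * diagonal d * U).trace = ∑ i, d i := by
  rw [trace_mul_cycle, hU, one_mul, trace_diagonal]

theorem transpose_mul_diagonal_mul_injective (hU : U * Uᵀ = 1) :
    Function.Injective fun d : ι → R => Uᵀ * diagonal d * U := by
  intro d d' h
  have hconj : ∀ d : ι → R, U * (Uᵀ * diagonal d * U) * Uᵀ = diagonal d := fun d => by
    simp only [← mul_assoc, hU, one_mul]
    rw [mul_assoc, hU, mul_one]
  exact diagonal_injective (by simpa only [hconj] using congrArg (fun M => U * M * Uᵀ) h)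

theorem transpose_mul_diagonal_mul_sub_smul_one (hU : U * Uᵀ = 1) (d : ι → R) (s : R) :
    Uᵀ * diagonal d * U - s • 1 = Uᵀ * diagonal (fun i => d i - s) * U := by
  have hU' : Uᵀ * U = 1 := mul_eq_one_comm.mp hU
  rw [← diagonal_sub, ← smul_one_eq_diagonal, mul_sub, sub_mul, mul_smul_comm, smul_mul_assoc,
    mul_one, hU']

end Matrix

theorem tracefreeProj_sub_smul_one {n : ℕ} (hn : n ≠ 0) (M : Matrix (Fin n) (Fin n) ℝ) (s : ℝ) :
    tracefreeProj (M - s • 1) = tracefreeProj M := by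
  have hn' : (n : ℝ) ≠ 0 := Nat.cast_ne_zero.mpr hn
  simp only [tracefreeProj, trace_sub, trace_smul, trace_one, Fintype.card_fin, smul_eq_mul,
    sub_div, mul_div_cancel_right₀ _ hn', sub_smul]
  abel

theorem tracefreeProj_transpose_mul_diagonal_mul {n : ℕ} {U : Matrix (Fin n) (Fin n) ℝ}
    (hU : U * Uᵀ = 1) (d : Fin n → ℝ) :
    tracefreeProj (Uᵀ * diagonal d * U) = Uᵀ * diagonal (fun p => d p - (∑ q, d q) / n) * U := by
  rw [tracefreeProj, trace_transpose_mul_diagonal_mul hU,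
    transpose_mul_diagonal_mul_sub_smul_one hU]

theorem of_mul_transpose_of_eq_one {n : ℕ} {e : Fin n → Fin n → ℝ}
    (horth : ∀ p q, ∑ i, e p i * e q i = if p = q then (1:ℝ) else 0) :
    of e * (of e)ᵀ = 1 := by
  ext p q
  simpa [mul_apply, one_apply] using horth p q

theorem mul_transpose_of_eq_of_mulVec_eq_smul {n : ℕ} {A : Matrix (Fin n) (Fin n) ℝ}
    {e : Fin n → Fin n → ℝ} {lam : Fin n → ℝ} (heig : ∀ p, A *ᵥ e p = lam p • e p) :
    A * (of e)ᵀ = (of e)ᵀ * diagonal lam := by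
  ext i p
  rw [mul_diagonal]
  simpa [mul_apply, mulVec, dotProduct, mul_comm] using congrFun (heig p) i

theorem sum_smul_symProd_self {n : ℕ} (e : Fin n → Fin n → ℝ) (c : Fin n → ℝ) :
    ∑ p, c p • symProd (e p) (e p) = (of e)ᵀ * diagonal (fun p => 2 * c p) * of e := by
  ext i j
  rw [mul_apply]
  simp only [Matrix.sum_apply, Matrix.smul_apply, symProd, mul_diagonal, transpose_apply, of_apply,
    smul_eq_mul]
  exact sum_congr rfl fun p _ => by ring

theorem KNid_transpose_mul_diagonal_mul {n : ℕ} {A U : Matrix (Fin n) (Fin n) ℝ}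
    {lam : Fin n → ℝ} (hA : A.IsSymm) (hU : U * Uᵀ = 1)
    (hAU : A * Uᵀ = Uᵀ * diagonal lam) (d : Fin n → ℝ) :
    KNid A (Uᵀ * diagonal d * U) = Uᵀ * diagonal (fun p => 2 * (lam p * d p)) * U
      - (∑ p, lam p * d p) • 1 - (∑ p, d p) • A := by
  have hUA : U * A = diagonal lam * U := by
    simpa [transpose_mul, hA.eq] using congrArg transpose hAU
  have hleft : A * (Uᵀ * diagonal d * U) = Uᵀ * diagonal (fun p => lam p * d p) * U := by
    rw [← mul_assoc, ← mul_assoc, hAU, mul_assoc Uᵀ, diagonal_mul_diagonal]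
  have hright : Uᵀ * diagonal d * U * A = Uᵀ * diagonal (fun p => lam p * d p) * U := by
    rw [mul_assoc, hUA, ← mul_assoc, mul_assoc Uᵀ, diagonal_mul_diagonal]
    simp only [mul_comm (d _)]
  rw [KNid_eq, (isSymm_transpose_mul_diagonal_mul U d).eq, hA.eq, hleft, hright,
    trace_transpose_mul_diagonal_mul hU, trace_transpose_mul_diagonal_mul hU, ← add_mul,
    ← mul_add, diagonal_add]
  simp only [two_mul]

theorem stmt2 {n : ℕ} (hn : 0 < n) (A : Matrix (Fin n) (Fin n) ℝ) (hA : A.IsSymm)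
    (e : Fin n → Fin n → ℝ) (lam : Fin n → ℝ)
    (horth : ∀ p q : Fin n, ∑ i : Fin n, e p i * e q i = if p = q then (1:ℝ) else 0)
    (heig : ∀ p : Fin n, A.mulVec (e p) = lam p • e p)
    (c : Fin n → ℝ) (lamE : ℝ) (hc : c ≠ 0)
    (hsum : ∑ p : Fin n, c p = 0)
    (heq : ∀ p : Fin n, 2 * lam p * c p - (2 / (n : ℝ)) * ∑ q : Fin n, c q * lam q
      = lamE * c p) :
    (∑ p : Fin n, c p • symProd (e p) (e p)) ≠ 0 ∧
    (∑ p : Fin n, c p • symProd (e p) (e p)).trace = 0 ∧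
    ((∑ p : Fin n, c p • symProd (e p) (e p)) : Matrix (Fin n) (Fin n) ℝ).IsSymm ∧
    tracefreeProj (KNid A (∑ p : Fin n, c p • symProd (e p) (e p)))
      = lamE • ∑ p : Fin n, c p • symProd (e p) (e p) := by
  have hU := of_mul_transpose_of_eq_one horth
  have hAU := mul_transpose_of_eq_of_mulVec_eq_smul heig
  have htwice : ∑ p, 2 * c p = 0 := by rw [← mul_sum, hsum, mul_zero]
  rw [sum_smul_symProd_self]
  refine ⟨fun h => hc ?_, by rw [trace_transpose_mul_diagonal_mul hU, htwice],
    isSymm_transpose_mul_diagonal_mul _ _, ?_⟩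
  · have h0 : (fun p => 2 * c p) = 0 :=
      transpose_mul_diagonal_mul_injective hU (by simpa using h)
    exact funext fun p => by simpa using congrFun h0 p
  · have hS : ∑ q, 2 * (lam q * (2 * c q)) = 4 * ∑ q, c q * lam q := by
      rw [mul_sum]
      exact sum_congr rfl fun q _ => by ring
    have hdiag : (fun p => 2 * (lam p * (2 * c p)) - (4 * ∑ q, c q * lam q) / n)
        = lamE • fun p => 2 * c p := by
      funext p
      simp only [Pi.smul_apply, smul_eq_mul]
      linear_combination (2:ℝ) * heq p
    rw [KNid_transpose_mul_diagonal_mul hA hU hAU, htwice, zero_smul, sub_zero,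
      tracefreeProj_sub_smul_one hn.ne', tracefreeProj_transpose_mul_diagonal_mul hU, hS, hdiag,
      diagonal_smul, Matrix.mul_smul, Matrix.smul_mul]
end

section
/- Let a ≤ b ≤ c be real numbers, s = a + b + c, and λ_± = s/3 ± (√2/3)·√(3(a²+b²+c²) − s²). Then λ_− ≤ a ≤ b ≤ c ≤ λ_+. -/
/-! Writing `s = a + b + c` and `Q = 3 (a² + b² + c²) - s²`, one has the identity
`2 Q = (3a - s)² + 3 (b - c)²`, so `|3a - s| ≤ √(2Q)`. By symmetry this holds for every entry,
i.e. each of `a, b, c` lies in `[λ₋, λ₊]`. -/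

open Real

lemma two_mul_three_mul_sum_sq_sub_sq_sum (a b c : ℝ) :
    2 * (3 * (a^2 + b^2 + c^2) - (a + b + c)^2) = (3 * a - (a + b + c))^2 + 3 * (b - c)^2 := by
  ring

lemma abs_sub_mean_le (a b c : ℝ) :
    |a - (a + b + c) / 3| ≤ √2 / 3 * √(3 * (a^2 + b^2 + c^2) - (a + b + c)^2) := by
  have hsq : |3 * a - (a + b + c)| ≤ √(2 * (3 * (a^2 + b^2 + c^2) - (a + b + c)^2)) := by
    rw [← sqrt_sq_eq_abs]
    apply sqrt_le_sqrt
    linarith [two_mul_three_mul_sum_sq_sub_sq_sum a b c, sq_nonneg (b - c)]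
  have hscale : |a - (a + b + c) / 3| = |3 * a - (a + b + c)| / 3 := by
    rw [show a - (a + b + c) / 3 = (3 * a - (a + b + c)) / 3 by ring, abs_div,
      abs_of_pos (three_pos : (0 : ℝ) < 3)]
  rw [sqrt_mul zero_le_two] at hsq
  rw [hscale]
  linarith

theorem stmt3 (a b c : ℝ) (hab : a ≤ b) (hbc : b ≤ c) :
    (a + b + c) / 3 - Real.sqrt 2 / 3 * Real.sqrt (3 * (a^2 + b^2 + c^2) - (a + b + c)^2)
      ≤ a ∧ a ≤ b ∧ b ≤ c ∧
    c ≤ (a + b + c) / 3 + Real.sqrt 2 / 3 * Real.sqrt (3 * (a^2 + b^2 + c^2) - (a + b + c)^2) := by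
  have ha := abs_sub_le_iff.1 (abs_sub_mean_le a b c)
  have hc := abs_sub_le_iff.1 (abs_sub_mean_le c a b)
  have hsum : c + a + b = a + b + c := by ring
  have hsumsq : c^2 + a^2 + b^2 = a^2 + b^2 + c^2 := by ring
  rw [hsum, hsumsq] at hc
  exact ⟨by linarith [ha.2], hab, hbc, by linarith [hc.1]⟩
end

section
/- Let a ≤ b ≤ c be real and λ_− = (a+b+c)/3 − (√2/3)·√(3(a²+b²+c²) − (a+b+c)²). If λ_− + a ≥ 0 (two-nonnegativity of the curvature operator of the second kind), then a ≥ 0 (nonnegative sectional curvature). -/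
/-! `λ₋` is at most `a` (indeed at most each of `a, b, c`), because
`2 (3 (a² + b² + c²) − (a + b + c)²) − (b + c − 2a)² = 3 (b − c)²`.
Hence `λ₋ + a ≥ 0` forces `2a ≥ 0`. -/

theorem sub_two_mul_le_sqrt_two_mul_sqrt (a b c : ℝ) :
    b + c - 2 * a ≤ √2 * √(3 * (a^2 + b^2 + c^2) - (a + b + c)^2) := by
  rw [← Real.sqrt_mul zero_le_two]
  apply Real.le_sqrt_of_sq_le
  nlinarith [sq_nonneg (b - c)]

theorem add_add_div_three_sub_sqrt_le (a b c : ℝ) :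
    (a + b + c) / 3 - √2 / 3 * √(3 * (a^2 + b^2 + c^2) - (a + b + c)^2) ≤ a := by
  linarith [sub_two_mul_le_sqrt_two_mul_sqrt a b c]

theorem stmt5_general (a b c : ℝ)
    (h : ((a + b + c) / 3
        - Real.sqrt 2 / 3 * Real.sqrt (3 * (a^2 + b^2 + c^2) - (a + b + c)^2)) + a ≥ 0) :
    a ≥ 0 := by
  linarith [add_add_div_three_sub_sqrt_le a b c]

theorem stmt5 (a b c : ℝ) (hab : a ≤ b) (hbc : b ≤ c)
    (h : ((a + b + c) / 3
        - Real.sqrt 2 / 3 * Real.sqrt (3 * (a^2 + b^2 + c^2) - (a + b + c)^2)) + a ≥ 0) :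
    a ≥ 0 :=
  stmt5_general a b c h
end

section
/- Let a ≤ b ≤ c be real and λ_− = (a+b+c)/3 − (√2/3)·√(3(a²+b²+c²) − (a+b+c)²). If a ≥ 0 (nonnegative sectional curvature), then λ_− + a + b + (1/3)c ≥ 0, i.e., the curvature operator of the second kind is 3⅓-nonnegative. -/
/-!
Since `3(a² + b² + c²) - (a + b + c)² = (a - b)² + (b - c)² + (c - a)²`, for nonnegative `a, b, c`
twice this spread is at most `(4a + 4b + 2c)²`: the difference is `2(6a² + 6b² + 18ab + 10ac + 10bc)`.
Taking square roots gives `λ₋ ≥ (a + b + c)/3 - (4a + 4b + 2c)/3 = -(a + b + c/3)`.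
-/

theorem sqrt_two_mul_sqrt_spread_le {a b c : ℝ} (ha : 0 ≤ a) (hb : 0 ≤ b) (hc : 0 ≤ c) :
    √2 * √(3 * (a ^ 2 + b ^ 2 + c ^ 2) - (a + b + c) ^ 2) ≤ 4 * a + 4 * b + 2 * c := by
  rw [← Real.sqrt_mul zero_le_two, Real.sqrt_le_left (by positivity)]
  nlinarith [mul_nonneg ha hb, mul_nonneg ha hc, mul_nonneg hb hc]

theorem stmt6 (a b c : ℝ) (hab : a ≤ b) (hbc : b ≤ c) (ha : a ≥ 0) :
    ((a + b + c) / 3 - Real.sqrt 2 / 3 * Real.sqrt (3 * (a^2 + b^2 + c^2) - (a + b + c)^2))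
      + a + b + (1 / 3) * c ≥ 0 := by
  have hb : 0 ≤ b := ha.trans hab
  linarith [sqrt_two_mul_sqrt_spread_le ha hb (hb.trans hbc)]
end

section
/- Let a ≤ b ≤ c be real and λ_− = (a+b+c)/3 − (√2/3)·√(3(a²+b²+c²) − (a+b+c)²). If λ_− + a + b + (1/3)c ≥ 0, then a + b ≥ 0 (nonnegative Ricci curvature). -/
/-! With `Q = 3(a² + b² + c²) - (a + b + c)²`, the hypothesis says `√(2Q) ≤ 4(a + b) + 2c`.
Since `2Q = (2c - a - b)² + 3(a - b)² ≥ (2c - (a + b))²`, this forces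
`2c - (a + b) ≤ 4(a + b) + 2c`, that is `a + b ≥ 0`. -/

lemma sq_two_mul_sub_add_le (a b c : ℝ) :
    (2 * c - (a + b)) ^ 2 ≤ 2 * (3 * (a ^ 2 + b ^ 2 + c ^ 2) - (a + b + c) ^ 2) := by
  nlinarith [sq_nonneg (a - b)]

lemma add_nonneg_of_sqrt_two_mul_le (a b c : ℝ)
    (h : √2 * √(3 * (a ^ 2 + b ^ 2 + c ^ 2) - (a + b + c) ^ 2) ≤ 4 * (a + b) + 2 * c) :
    0 ≤ a + b := by
  rw [← Real.sqrt_mul zero_le_two, Real.sqrt_le_iff] at h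
  obtain ⟨h_nonneg, h_sq⟩ := h
  have : 2 * c - (a + b) ≤ 4 * (a + b) + 2 * c :=
    le_of_sq_le_sq ((sq_two_mul_sub_add_le a b c).trans h_sq) h_nonneg
  linarith

theorem stmt7_general (a b c : ℝ)
    (h : ((a + b + c) / 3
        - Real.sqrt 2 / 3 * Real.sqrt (3 * (a^2 + b^2 + c^2) - (a + b + c)^2))
      + a + b + (1 / 3) * c ≥ 0) :
    a + b ≥ 0 :=
  add_nonneg_of_sqrt_two_mul_le a b c (by linarith)

theorem stmt7 (a b c : ℝ) (hab : a ≤ b) (hbc : b ≤ c)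
    (h : ((a + b + c) / 3
        - Real.sqrt 2 / 3 * Real.sqrt (3 * (a^2 + b^2 + c^2) - (a + b + c)^2))
      + a + b + (1 / 3) * c ≥ 0) :
    a + b ≥ 0 :=
  stmt7_general a b c h
end

section
/- Let a ≤ b ≤ c be real and λ_− = (a+b+c)/3 − (√2/3)·√(3(a²+b²+c²) − (a+b+c)²). If a + b ≥ 0 (nonnegative Ricci curvature), then λ_− + a + b + c ≥ 0, i.e., the curvature operator of the second kind is four-nonnegative. -/
/-! Put `s = a + b + c`. Since `-b ≤ a ≤ b ≤ c` we have `|a|, |b| ≤ c` and `0 ≤ c ≤ s`, so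
`a² + b² + c² ≤ 3c² ≤ 3s²`. This is exactly what `λ₋ + s ≥ 0`, i.e. `√2 · √(3(a² + b² + c²) - s²) ≤ 4s`,
amounts to after squaring. -/

lemma sq_add_sq_add_sq_le_three_mul_sq_add {a b c : ℝ} (hab : a ≤ b) (hbc : b ≤ c)
    (h : 0 ≤ a + b) : a ^ 2 + b ^ 2 + c ^ 2 ≤ 3 * (a + b + c) ^ 2 := by
  have ha : a ^ 2 ≤ c ^ 2 := sq_le_sq' (by linarith) (by linarith)
  have hb : b ^ 2 ≤ c ^ 2 := sq_le_sq' (by linarith) hbc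
  have hc : c ^ 2 ≤ (a + b + c) ^ 2 := pow_le_pow_left₀ (by linarith) (by linarith) 2
  linarith

lemma sqrt_two_mul_sqrt_le {q s : ℝ} (hs : 0 ≤ s) (hq : q ≤ 3 * s ^ 2) :
    √2 * √(3 * q - s ^ 2) ≤ 4 * s := by
  rw [← Real.sqrt_mul zero_le_two, Real.sqrt_le_iff]
  exact ⟨by linarith, by nlinarith⟩

theorem stmt8 (a b c : ℝ) (hab : a ≤ b) (hbc : b ≤ c) (h : a + b ≥ 0) :
    ((a + b + c) / 3 - Real.sqrt 2 / 3 * Real.sqrt (3 * (a^2 + b^2 + c^2) - (a + b + c)^2))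
      + a + b + c ≥ 0 := by
  have hs : 0 ≤ a + b + c := by linarith
  have := sqrt_two_mul_sqrt_le hs (sq_add_sq_add_sq_le_three_mul_sq_add hab hbc h)
  linarith
end

section
/- Let a(t), b(t), c(t) solve the ODE system a' = a² + bc, b' = b² + ac, c' = c² + ab on [0,T), with a ≤ b ≤ c and S := 2(a+b+c) > 0 throughout. Then the quantity a/S is monotone non-decreasing in t; indeed (a/S)' = (2/S²)(b²(c−a) + c²(b−a)) ≥ 0. -/
/-! By the quotient rule, `(a/S)' = (a' S - a S') / S²`, and substituting the ODE together with
`S' = 2(a² + b² + c² + ab + ac + bc)` collapses the numerator to `2(b²(c - a) + c²(b - a))`,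
which is nonnegative once `a` is the smallest eigenvalue. The mean value theorem then turns the
nonnegative derivative into monotonicity on the interval `[0, T)`. -/

theorem monotoneOn_of_hasDerivAt_nonneg {D : Set ℝ} (hD : Convex ℝ D) {f f' : ℝ → ℝ}
    (hf : ∀ x ∈ D, HasDerivAt f (f' x) x) (hf'₀ : ∀ x ∈ D, 0 ≤ f' x) : MonotoneOn f D :=
  monotoneOn_of_hasDerivWithinAt_nonneg hD
    (fun x hx ↦ (hf x hx).continuousAt.continuousWithinAt)
    (fun x hx ↦ (hf x (interior_subset hx)).hasDerivWithinAt)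
    (fun x hx ↦ hf'₀ x (interior_subset hx))

theorem sq_mul_sub_add_sq_mul_sub_nonneg {x y z : ℝ} (hxy : x ≤ y) (hxz : x ≤ z) :
    0 ≤ y ^ 2 * (z - x) + z ^ 2 * (y - x) := by
  have hzx : 0 ≤ z - x := sub_nonneg.mpr hxz
  have hyx : 0 ≤ y - x := sub_nonneg.mpr hxy
  positivity

section HamiltonODE

variable {a b c : ℝ → ℝ} {t : ℝ}

theorem hasDerivAt_scalarCurvature (ha : HasDerivAt a ((a t) ^ 2 + b t * c t) t)
    (hb : HasDerivAt b ((b t) ^ 2 + a t * c t) t) (hc : HasDerivAt c ((c t) ^ 2 + a t * b t) t) :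
    HasDerivAt (fun s ↦ 2 * (a s + b s + c s))
      (2 * ((a t) ^ 2 + (b t) ^ 2 + (c t) ^ 2 + a t * b t + a t * c t + b t * c t)) t :=
  (((ha.add hb).add hc).const_mul 2).congr_deriv (by ring)

theorem hasDerivAt_div_scalarCurvature (ha : HasDerivAt a ((a t) ^ 2 + b t * c t) t)
    (hb : HasDerivAt b ((b t) ^ 2 + a t * c t) t) (hc : HasDerivAt c ((c t) ^ 2 + a t * b t) t)
    (hS : 2 * (a t + b t + c t) ≠ 0) :
    HasDerivAt (fun s ↦ a s / (2 * (a s + b s + c s)))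
      (2 / (2 * (a t + b t + c t)) ^ 2
        * ((b t) ^ 2 * (c t - a t) + (c t) ^ 2 * (b t - a t))) t :=
  (ha.fun_div (hasDerivAt_scalarCurvature ha hb hc) hS).congr_deriv (by field_simp; ring)

end HamiltonODE

theorem stmt12 (a b c : ℝ → ℝ) (T : ℝ)
    (ha : ∀ t ∈ Set.Ico (0:ℝ) T, HasDerivAt a ((a t)^2 + b t * c t) t)
    (hb : ∀ t ∈ Set.Ico (0:ℝ) T, HasDerivAt b ((b t)^2 + a t * c t) t)
    (hc : ∀ t ∈ Set.Ico (0:ℝ) T, HasDerivAt c ((c t)^2 + a t * b t) t)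
    (hord : ∀ t ∈ Set.Ico (0:ℝ) T, a t ≤ b t ∧ b t ≤ c t)
    (hS : ∀ t ∈ Set.Ico (0:ℝ) T, 0 < 2 * (a t + b t + c t)) :
    (∀ t ∈ Set.Ico (0:ℝ) T,
      HasDerivAt (fun s => a s / (2 * (a s + b s + c s)))
        (2 / (2 * (a t + b t + c t))^2
          * ((b t)^2 * (c t - a t) + (c t)^2 * (b t - a t))) t ∧
      0 ≤ 2 / (2 * (a t + b t + c t))^2
          * ((b t)^2 * (c t - a t) + (c t)^2 * (b t - a t))) ∧
    (∀ s ∈ Set.Ico (0:ℝ) T, ∀ t ∈ Set.Ico (0:ℝ) T, s ≤ t →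
      a s / (2 * (a s + b s + c s)) ≤ a t / (2 * (a t + b t + c t))) := by
  have hderiv : ∀ t ∈ Set.Ico (0:ℝ) T, HasDerivAt (fun s => a s / (2 * (a s + b s + c s)))
      (2 / (2 * (a t + b t + c t))^2
        * ((b t)^2 * (c t - a t) + (c t)^2 * (b t - a t))) t := fun t ht ↦
    hasDerivAt_div_scalarCurvature (ha t ht) (hb t ht) (hc t ht) (hS t ht).ne'
  have hnonneg : ∀ t ∈ Set.Ico (0:ℝ) T, 0 ≤ 2 / (2 * (a t + b t + c t))^2
      * ((b t)^2 * (c t - a t) + (c t)^2 * (b t - a t)) := fun t ht ↦ by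
    obtain ⟨hab, hbc⟩ := hord t ht
    have := sq_mul_sub_add_sq_mul_sub_nonneg hab (hab.trans hbc)
    positivity
  exact ⟨fun t ht ↦ ⟨hderiv t ht, hnonneg t ht⟩,
    monotoneOn_of_hasDerivAt_nonneg (convex_Ico 0 T) hderiv hnonneg⟩
end

section
/- Let a(t), b(t), c(t) solve a' = a² + bc, b' = b² + ac, c' = c² + ab on [0,T), with a ≤ b ≤ c and S := 2(a+b+c) > 0 throughout. Then (a+b)/S is monotone non-decreasing and c/S is monotone non-increasing in t; indeed ((a+b)/S)' = (2/S²)(a²(c−b) + b²(c−a)) ≥ 0 and (c/S)' = (2/S²)(a²(b−c) + b²(a−c)) ≤ 0. -/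
theorem antitoneOn_of_hasDerivAt_nonpos {D : Set ℝ} (hD : Convex ℝ D) {f f' : ℝ → ℝ}
    (hf : ∀ x ∈ D, HasDerivAt f (f' x) x) (hf'₀ : ∀ x ∈ D, f' x ≤ 0) : AntitoneOn f D :=
  antitoneOn_of_hasDerivWithinAt_nonpos hD
    (fun x hx => (hf x hx).continuousAt.continuousWithinAt)
    (fun x hx => (hf x (interior_subset hx)).hasDerivWithinAt)
    (fun x hx => hf'₀ x (interior_subset hx))

namespace HamiltonODE

section Derivatives

variable {a b c : ℝ → ℝ} {t : ℝ}
  (ha : HasDerivAt a (a t ^ 2 + b t * c t) t)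
  (hb : HasDerivAt b (b t ^ 2 + a t * c t) t)
  (hc : HasDerivAt c (c t ^ 2 + a t * b t) t)
include ha hb hc

theorem hasDerivAt_scalar :
    HasDerivAt (fun s => 2 * (a s + b s + c s))
      (2 * (a t ^ 2 + b t ^ 2 + c t ^ 2 + a t * b t + a t * c t + b t * c t)) t :=
  (((ha.add hb).add hc).const_mul 2).congr_deriv (by ring)

theorem hasDerivAt_add_div_scalar (hS : 2 * (a t + b t + c t) ≠ 0) :
    HasDerivAt (fun s => (a s + b s) / (2 * (a s + b s + c s)))
      (2 / (2 * (a t + b t + c t)) ^ 2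
        * (a t ^ 2 * (c t - b t) + b t ^ 2 * (c t - a t))) t :=
  ((ha.add hb).div (hasDerivAt_scalar ha hb hc) hS).congr_deriv
    (by simp only [Pi.add_apply]; ring)

theorem hasDerivAt_div_scalar (hS : 2 * (a t + b t + c t) ≠ 0) :
    HasDerivAt (fun s => c s / (2 * (a s + b s + c s)))
      (2 / (2 * (a t + b t + c t)) ^ 2
        * (a t ^ 2 * (b t - c t) + b t ^ 2 * (a t - c t))) t :=
  (hc.div (hasDerivAt_scalar ha hb hc) hS).congr_deriv (by ring)

end Derivatives

theorem sq_mul_sub_add_sq_mul_sub_nonneg {a b c : ℝ} (hab : a ≤ b) (hbc : b ≤ c) :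
    0 ≤ a ^ 2 * (c - b) + b ^ 2 * (c - a) :=
  add_nonneg (mul_nonneg (sq_nonneg a) (sub_nonneg.2 hbc))
    (mul_nonneg (sq_nonneg b) (sub_nonneg.2 (hab.trans hbc)))

theorem add_div_scalar_rate_nonneg {a b c : ℝ} (hab : a ≤ b) (hbc : b ≤ c) :
    0 ≤ 2 / (2 * (a + b + c)) ^ 2 * (a ^ 2 * (c - b) + b ^ 2 * (c - a)) :=
  mul_nonneg (by positivity) (sq_mul_sub_add_sq_mul_sub_nonneg hab hbc)

theorem div_scalar_rate_nonpos {a b c : ℝ} (hab : a ≤ b) (hbc : b ≤ c) :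
    2 / (2 * (a + b + c)) ^ 2 * (a ^ 2 * (b - c) + b ^ 2 * (a - c)) ≤ 0 := by
  linear_combination add_div_scalar_rate_nonneg hab hbc

end HamiltonODE

theorem stmt13 (a b c : ℝ → ℝ) (T : ℝ)
    (ha : ∀ t ∈ Set.Ico (0:ℝ) T, HasDerivAt a ((a t)^2 + b t * c t) t)
    (hb : ∀ t ∈ Set.Ico (0:ℝ) T, HasDerivAt b ((b t)^2 + a t * c t) t)
    (hc : ∀ t ∈ Set.Ico (0:ℝ) T, HasDerivAt c ((c t)^2 + a t * b t) t)
    (hord : ∀ t ∈ Set.Ico (0:ℝ) T, a t ≤ b t ∧ b t ≤ c t)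
    (hS : ∀ t ∈ Set.Ico (0:ℝ) T, 0 < 2 * (a t + b t + c t)) :
    (∀ t ∈ Set.Ico (0:ℝ) T,
      HasDerivAt (fun s => (a s + b s) / (2 * (a s + b s + c s)))
        (2 / (2 * (a t + b t + c t))^2
          * ((a t)^2 * (c t - b t) + (b t)^2 * (c t - a t))) t ∧
      0 ≤ 2 / (2 * (a t + b t + c t))^2
          * ((a t)^2 * (c t - b t) + (b t)^2 * (c t - a t))) ∧
    (∀ t ∈ Set.Ico (0:ℝ) T,
      HasDerivAt (fun s => c s / (2 * (a s + b s + c s)))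
        (2 / (2 * (a t + b t + c t))^2
          * ((a t)^2 * (b t - c t) + (b t)^2 * (a t - c t))) t ∧
      2 / (2 * (a t + b t + c t))^2
          * ((a t)^2 * (b t - c t) + (b t)^2 * (a t - c t)) ≤ 0) ∧
    (∀ s ∈ Set.Ico (0:ℝ) T, ∀ t ∈ Set.Ico (0:ℝ) T, s ≤ t →
      (a s + b s) / (2 * (a s + b s + c s)) ≤ (a t + b t) / (2 * (a t + b t + c t)) ∧
      c t / (2 * (a t + b t + c t)) ≤ c s / (2 * (a s + b s + c s))) := by
  have deriv₁ := fun t ht =>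
    HamiltonODE.hasDerivAt_add_div_scalar (ha t ht) (hb t ht) (hc t ht) (hS t ht).ne'
  have deriv₂ := fun t ht =>
    HamiltonODE.hasDerivAt_div_scalar (ha t ht) (hb t ht) (hc t ht) (hS t ht).ne'
  have sign₁ := fun t ht => HamiltonODE.add_div_scalar_rate_nonneg (hord t ht).1 (hord t ht).2
  have sign₂ := fun t ht => HamiltonODE.div_scalar_rate_nonpos (hord t ht).1 (hord t ht).2
  refine ⟨fun t ht => ⟨deriv₁ t ht, sign₁ t ht⟩, fun t ht => ⟨deriv₂ t ht, sign₂ t ht⟩,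
    fun s hs t ht hst => ⟨?_, ?_⟩⟩
  · exact monotoneOn_of_hasDerivAt_nonneg (convex_Ico 0 T) deriv₁ sign₁ hs ht hst
  · exact antitoneOn_of_hasDerivAt_nonpos (convex_Ico 0 T) deriv₂ sign₂ hs ht hst
end

section
/- Let a(t) ≤ b(t) ≤ c(t) solve a' = a² + bc, b' = b² + ac, c' = c² + ab on [0,T) with S := 2(a+b+c) > 0, and λ_− := (a+b+c)/3 − (√2/3)√(3(a²+b²+c²)−(a+b+c)²). Then λ_−/S is monotone non-decreasing in t. -/
/-!
With `σ = a + b + c`, `e₂ = ab + bc + ca`, `e₃ = abc` and `q = e₂ / σ²` one has `λ₋ / S = 1/6 - √(1 - 3q) / 3`,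
so it suffices that `q` is non-decreasing along the flow. Along the system `a' = a² + bc`, … the
elementary symmetric functions evolve by `σ' = σ² - e₂` and `e₂' = 2σe₂ - 6e₃`, whence
`q' = 2(e₂² - 3σe₃)/σ³ ≥ 0`.
-/

open Set

lemma three_mul_prod_mul_sum_le_sq (a b c : ℝ) :
    3 * (a * b * c) * (a + b + c) ≤ (a * b + b * c + c * a) ^ 2 := by
  nlinarith [sq_nonneg (a * b - b * c), sq_nonneg (b * c - c * a), sq_nonneg (c * a - a * b)]

lemma lambdaMinus_div_eq {a b c : ℝ} (hσ : 0 < a + b + c) :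
    ((a + b + c) / 3 - √2 / 3 * √(3 * (a ^ 2 + b ^ 2 + c ^ 2) - (a + b + c) ^ 2))
        / (2 * (a + b + c))
      = 1 / 6 - √(1 - 3 * ((a * b + b * c + c * a) / (a + b + c) ^ 2)) / 3 := by
  have hspread : 3 * (a ^ 2 + b ^ 2 + c ^ 2) - (a + b + c) ^ 2
      = 2 ^ 2 * (a + b + c) ^ 2 * (1 - 3 * ((a * b + b * c + c * a) / (a + b + c) ^ 2)) / 2 := by
    field_simp
    ring
  have hq : 0 ≤ 1 - 3 * ((a * b + b * c + c * a) / (a + b + c) ^ 2) := by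
    rw [sub_nonneg, ← mul_div_assoc, div_le_one (by positivity)]
    nlinarith [sq_nonneg (a - b), sq_nonneg (b - c), sq_nonneg (c - a)]
  rw [hspread, Real.sqrt_div' _ zero_le_two, Real.sqrt_mul' _ hq, Real.sqrt_mul (by positivity),
    Real.sqrt_sq zero_le_two, Real.sqrt_sq hσ.le]
  have h2 : √2 ≠ 0 := by positivity
  field_simp
  ring

lemma hasDerivAt_esymm2_div_sq_sum {a b c : ℝ → ℝ} {t : ℝ}
    (ha : HasDerivAt a (a t ^ 2 + b t * c t) t) (hb : HasDerivAt b (b t ^ 2 + a t * c t) t)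
    (hc : HasDerivAt c (c t ^ 2 + a t * b t) t) (hσ : a t + b t + c t ≠ 0) :
    HasDerivAt (fun t ↦ (a t * b t + b t * c t + c t * a t) / (a t + b t + c t) ^ 2)
      (2 * ((a t * b t + b t * c t + c t * a t) ^ 2 - 3 * (a t * b t * c t) * (a t + b t + c t))
        / (a t + b t + c t) ^ 3) t := by
  have he₂ := ((ha.mul hb).add (hb.mul hc)).add (hc.mul ha)
  have hσ₂ := ((ha.add hb).add hc).pow 2
  refine (he₂.div hσ₂ (pow_ne_zero 2 hσ)).congr_deriv ?_
  simp only [Pi.add_apply, Pi.mul_apply, Pi.pow_apply]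
  field_simp
  ring

lemma monotoneOn_esymm2_div_sq_sum {a b c : ℝ → ℝ} {s : Set ℝ} (hs : Convex ℝ s)
    (ha : ∀ t ∈ s, HasDerivAt a (a t ^ 2 + b t * c t) t)
    (hb : ∀ t ∈ s, HasDerivAt b (b t ^ 2 + a t * c t) t)
    (hc : ∀ t ∈ s, HasDerivAt c (c t ^ 2 + a t * b t) t)
    (hσ : ∀ t ∈ s, 0 < a t + b t + c t) :
    MonotoneOn (fun t ↦ (a t * b t + b t * c t + c t * a t) / (a t + b t + c t) ^ 2) s := by
  have hderiv t (ht : t ∈ s) :=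
    hasDerivAt_esymm2_div_sq_sum (ha t ht) (hb t ht) (hc t ht) (hσ t ht).ne'
  refine monotoneOn_of_hasDerivWithinAt_nonneg hs
    (fun t ht ↦ (hderiv t ht).continuousAt.continuousWithinAt)
    (fun t ht ↦ (hderiv t (interior_subset ht)).hasDerivWithinAt) fun t ht ↦ ?_
  have := hσ t (interior_subset ht)
  have := three_mul_prod_mul_sum_le_sq (a t) (b t) (c t)
  apply div_nonneg <;> [nlinarith; positivity]

theorem stmt16_general (a b c : ℝ → ℝ) (T : ℝ)
    (ha : ∀ t ∈ Set.Ico (0:ℝ) T, HasDerivAt a ((a t)^2 + b t * c t) t)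
    (hb : ∀ t ∈ Set.Ico (0:ℝ) T, HasDerivAt b ((b t)^2 + a t * c t) t)
    (hc : ∀ t ∈ Set.Ico (0:ℝ) T, HasDerivAt c ((c t)^2 + a t * b t) t)
    (hS : ∀ t ∈ Set.Ico (0:ℝ) T, 0 < 2 * (a t + b t + c t)) :
    ∀ s ∈ Set.Ico (0:ℝ) T, ∀ t ∈ Set.Ico (0:ℝ) T, s ≤ t →
      ((a s + b s + c s) / 3
          - Real.sqrt 2 / 3
            * Real.sqrt (3 * ((a s)^2 + (b s)^2 + (c s)^2) - (a s + b s + c s)^2))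
        / (2 * (a s + b s + c s))
      ≤ ((a t + b t + c t) / 3
          - Real.sqrt 2 / 3
            * Real.sqrt (3 * ((a t)^2 + (b t)^2 + (c t)^2) - (a t + b t + c t)^2))
        / (2 * (a t + b t + c t)) := by
  have hσ : ∀ t ∈ Ico (0 : ℝ) T, 0 < a t + b t + c t := fun t ht ↦ by linarith [hS t ht]
  intro s hs t ht hst
  rw [lambdaMinus_div_eq (hσ s hs), lambdaMinus_div_eq (hσ t ht)]
  have hq := monotoneOn_esymm2_div_sq_sum (convex_Ico 0 T) ha hb hc hσ hs ht hst
  gcongr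

theorem stmt16 (a b c : ℝ → ℝ) (T : ℝ)
    (ha : ∀ t ∈ Set.Ico (0:ℝ) T, HasDerivAt a ((a t)^2 + b t * c t) t)
    (hb : ∀ t ∈ Set.Ico (0:ℝ) T, HasDerivAt b ((b t)^2 + a t * c t) t)
    (hc : ∀ t ∈ Set.Ico (0:ℝ) T, HasDerivAt c ((c t)^2 + a t * b t) t)
    (hord : ∀ t ∈ Set.Ico (0:ℝ) T, a t ≤ b t ∧ b t ≤ c t)
    (hS : ∀ t ∈ Set.Ico (0:ℝ) T, 0 < 2 * (a t + b t + c t)) :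
    ∀ s ∈ Set.Ico (0:ℝ) T, ∀ t ∈ Set.Ico (0:ℝ) T, s ≤ t →
      ((a s + b s + c s) / 3
          - Real.sqrt 2 / 3
            * Real.sqrt (3 * ((a s)^2 + (b s)^2 + (c s)^2) - (a s + b s + c s)^2))
        / (2 * (a s + b s + c s))
      ≤ ((a t + b t + c t) / 3
          - Real.sqrt 2 / 3
            * Real.sqrt (3 * ((a t)^2 + (b t)^2 + (c t)^2) - (a t + b t + c t)^2))
        / (2 * (a t + b t + c t)) :=
  stmt16_general a b c T ha hb hc hS
end

section
/- For α ∈ [1,5], define f_α on real triples a ≤ b ≤ c by f_α = λ_− + (α−1)a if α ∈ [1,2); λ_− + a + (α−2)b if α ∈ [2,3); λ_− + a + b + (α−3)c if α ∈ [3,4); λ_− + a + b + c + (α−4)λ_+ if α ∈ [4,5], where λ_± = (a+b+c)/3 ± (√2/3)√(3(a²+b²+c²)−(a+b+c)²). Then along any solution of a' = a²+bc, b' = b²+ac, c' = c²+ab with S = 2(a+b+c) > 0, if f_α ≥ γ·S at time 0 for some real γ, then f_α ≥ γ·S for all t ∈ [0,T). -/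
/-!
Write `U = a + b + c` and `Q = 3(a² + b² + c²) - U²`, so that `λ± = U/3 ± (√2/3)·√Q`.
`f_α` is positively homogeneous of degree one, so `f_α / U` only depends on the normalized triple
`(a, b, c) / U`. Along Hamilton's ODE with `a ≤ b ≤ c` and `U > 0`, the ratios `a/U` and
`(a + b)/U` increase while `Q/U²` decreases (the numerator of its derivative is
`-6U((ab - bc)² + (bc - ca)² + (ca - ab)²)`); on each range of `α`, `f_α / U` is a
nonnegative combination of these monotone quantities and constants, hence nondecreasing.
-/

/-- The smallest eigenvalue `λ₋` of the 3D curvature operator of the second kind. -/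
noncomputable def lamMinus (a b c : ℝ) : ℝ :=
  (a + b + c) / 3 - Real.sqrt 2 / 3 * Real.sqrt (3 * (a^2 + b^2 + c^2) - (a + b + c)^2)

/-- The largest eigenvalue `λ₊` of the 3D curvature operator of the second kind. -/
noncomputable def lamPlus (a b c : ℝ) : ℝ :=
  (a + b + c) / 3 + Real.sqrt 2 / 3 * Real.sqrt (3 * (a^2 + b^2 + c^2) - (a + b + c)^2)

/-- `f_α`, measuring `α`-nonnegativity of the curvature operator of the second kind. -/
noncomputable def fAlpha (α a b c : ℝ) : ℝ :=
  if α < 2 then lamMinus a b c + (α - 1) * a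
  else if α < 3 then lamMinus a b c + a + (α - 2) * b
  else if α < 4 then lamMinus a b c + a + b + (α - 3) * c
  else lamMinus a b c + a + b + c + (α - 4) * lamPlus a b c

open Set

def spread (x y z : ℝ) : ℝ := 3 * (x^2 + y^2 + z^2) - (x + y + z)^2

theorem lamMinus_eq_spread (x y z : ℝ) :
    lamMinus x y z = (x + y + z) / 3 - Real.sqrt 2 / 3 * Real.sqrt (spread x y z) := rfl

theorem lamPlus_eq_spread (x y z : ℝ) :
    lamPlus x y z = (x + y + z) / 3 + Real.sqrt 2 / 3 * Real.sqrt (spread x y z) := rfl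

theorem spread_div (x y z s : ℝ) : spread (x / s) (y / s) (z / s) = spread x y z / s^2 := by
  unfold spread; ring

theorem sqrt_spread_div {s : ℝ} (x y z : ℝ) (hs : 0 < s) :
    Real.sqrt (spread (x / s) (y / s) (z / s)) = Real.sqrt (spread x y z) / s := by
  rw [spread_div, Real.sqrt_div' _ (sq_nonneg s), Real.sqrt_sq hs.le]

theorem fAlpha_div (α x y z : ℝ) {s : ℝ} (hs : 0 < s) :
    fAlpha α (x / s) (y / s) (z / s) = fAlpha α x y z / s := by
  simp only [fAlpha, lamMinus_eq_spread, lamPlus_eq_spread, sqrt_spread_div x y z hs]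
  split_ifs <;> ring

-- With equal sums, `x + y ≤ x' + y'` also says `z' ≤ z`, which the range `3 ≤ α < 4` needs.
theorem fAlpha_le_fAlpha {α x y z x' y' z' : ℝ} (hα : α ∈ Icc (1:ℝ) 5)
    (hsum : x + y + z = x' + y' + z') (hx : x ≤ x') (hxy : x + y ≤ x' + y')
    (hspread : spread x' y' z' ≤ spread x y z) :
    fAlpha α x y z ≤ fAlpha α x' y' z' := by
  obtain ⟨h1, h5⟩ := hα
  have hsqrt : Real.sqrt 2 / 3 * Real.sqrt (spread x' y' z')
      ≤ Real.sqrt 2 / 3 * Real.sqrt (spread x y z) :=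
    mul_le_mul_of_nonneg_left (Real.sqrt_le_sqrt hspread) (by positivity)
  simp only [fAlpha, lamMinus_eq_spread, lamPlus_eq_spread]
  split_ifs <;> nlinarith

theorem monotoneOn_div_of_hasDerivAt {D : Set ℝ} (hD : Convex ℝ D) {f g f' g' : ℝ → ℝ}
    (hf : ∀ t ∈ D, HasDerivAt f (f' t) t) (hg : ∀ t ∈ D, HasDerivAt g (g' t) t)
    (hg₀ : ∀ t ∈ D, 0 < g t) (h : ∀ t ∈ D, f t * g' t ≤ f' t * g t) :
    MonotoneOn (fun t => f t / g t) D := by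
  refine monotoneOn_of_hasDerivWithinAt_nonneg hD
    (fun t ht => ((hf t ht).div (hg t ht) (hg₀ t ht).ne').continuousAt.continuousWithinAt)
    (fun t ht => ((hf t (interior_subset ht)).div (hg t (interior_subset ht))
      (hg₀ t (interior_subset ht)).ne').hasDerivWithinAt) fun t ht => ?_
  exact div_nonneg (sub_nonneg.2 (h t (interior_subset ht))) (sq_nonneg _)

theorem antitoneOn_div_of_hasDerivAt {D : Set ℝ} (hD : Convex ℝ D) {f g f' g' : ℝ → ℝ}
    (hf : ∀ t ∈ D, HasDerivAt f (f' t) t) (hg : ∀ t ∈ D, HasDerivAt g (g' t) t)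
    (hg₀ : ∀ t ∈ D, 0 < g t) (h : ∀ t ∈ D, f' t * g t ≤ f t * g' t) :
    AntitoneOn (fun t => f t / g t) D := by
  refine antitoneOn_of_hasDerivWithinAt_nonpos hD
    (fun t ht => ((hf t ht).div (hg t ht) (hg₀ t ht).ne').continuousAt.continuousWithinAt)
    (fun t ht => ((hf t (interior_subset ht)).div (hg t (interior_subset ht))
      (hg₀ t (interior_subset ht)).ne').hasDerivWithinAt) fun t ht => ?_
  exact div_nonpos_of_nonpos_of_nonneg (sub_nonpos.2 (h t (interior_subset ht))) (sq_nonneg _)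

structure IsHamiltonODESolution (a b c : ℝ → ℝ) (D : Set ℝ) : Prop where
  hasDerivAt_a : ∀ t ∈ D, HasDerivAt a ((a t)^2 + b t * c t) t
  hasDerivAt_b : ∀ t ∈ D, HasDerivAt b ((b t)^2 + a t * c t) t
  hasDerivAt_c : ∀ t ∈ D, HasDerivAt c ((c t)^2 + a t * b t) t

namespace IsHamiltonODESolution

variable {a b c : ℝ → ℝ} {D : Set ℝ}

theorem hasDerivAt_sum (h : IsHamiltonODESolution a b c D) {t : ℝ} (ht : t ∈ D) :
    HasDerivAt (fun s => a s + b s + c s)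
      ((a t)^2 + (b t)^2 + (c t)^2 + a t * b t + b t * c t + a t * c t) t :=
  (((h.hasDerivAt_a t ht).add (h.hasDerivAt_b t ht)).add (h.hasDerivAt_c t ht)).congr_deriv
    (by ring)

theorem hasDerivAt_spread (h : IsHamiltonODESolution a b c D) {t : ℝ} (ht : t ∈ D) :
    HasDerivAt (fun s => spread (a s) (b s) (c s))
      (6 * ((a t)^3 + (b t)^3 + (c t)^3 + 3 * a t * b t * c t)
        - 2 * (a t + b t + c t)
          * ((a t)^2 + (b t)^2 + (c t)^2 + a t * b t + b t * c t + a t * c t)) t := by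
  have := ((((h.hasDerivAt_a t ht).pow 2).add ((h.hasDerivAt_b t ht).pow 2)).add
    ((h.hasDerivAt_c t ht).pow 2)).const_mul 3 |>.sub ((h.hasDerivAt_sum ht).pow 2)
  exact this.congr_deriv (by ring)

theorem monotoneOn_fst_div_sum (h : IsHamiltonODESolution a b c D) (hD : Convex ℝ D)
    (hord : ∀ t ∈ D, a t ≤ b t ∧ b t ≤ c t) (hU : ∀ t ∈ D, 0 < a t + b t + c t) :
    MonotoneOn (fun t => a t / (a t + b t + c t)) D := by
  refine monotoneOn_div_of_hasDerivAt hD h.hasDerivAt_a (fun t ht => h.hasDerivAt_sum ht) hU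
    fun t ht => ?_
  obtain ⟨hab, hbc⟩ := hord t ht
  nlinarith [mul_nonneg (sq_nonneg (b t)) (sub_nonneg.2 (hab.trans hbc)),
    mul_nonneg (sq_nonneg (c t)) (sub_nonneg.2 hab)]

theorem monotoneOn_fst_add_snd_div_sum (h : IsHamiltonODESolution a b c D) (hD : Convex ℝ D)
    (hord : ∀ t ∈ D, a t ≤ b t ∧ b t ≤ c t) (hU : ∀ t ∈ D, 0 < a t + b t + c t) :
    MonotoneOn (fun t => (a t + b t) / (a t + b t + c t)) D := by
  refine monotoneOn_div_of_hasDerivAt hD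
    (fun t ht => (h.hasDerivAt_a t ht).add (h.hasDerivAt_b t ht))
    (fun t ht => h.hasDerivAt_sum ht) hU fun t ht => ?_
  obtain ⟨hab, hbc⟩ := hord t ht
  nlinarith [mul_nonneg (sq_nonneg (b t)) (sub_nonneg.2 (hab.trans hbc)),
    mul_nonneg (sq_nonneg (a t)) (sub_nonneg.2 hbc)]

theorem antitoneOn_spread_div_sq_sum (h : IsHamiltonODESolution a b c D) (hD : Convex ℝ D)
    (hU : ∀ t ∈ D, 0 < a t + b t + c t) :
    AntitoneOn (fun t => spread (a t) (b t) (c t) / (a t + b t + c t)^2) D := by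
  refine antitoneOn_div_of_hasDerivAt hD (fun t ht => h.hasDerivAt_spread ht)
    (fun t ht => (h.hasDerivAt_sum ht).pow 2) (fun t ht => pow_pos (hU t ht) 2) fun t ht => ?_
  set x := a t; set y := b t; set z := c t
  have hsq : 0 ≤ (x * y - y * z)^2 + (y * z - z * x)^2 + (z * x - x * y)^2 := by positivity
  have key : (6 * (x^3 + y^3 + z^3 + 3 * x * y * z) - 2 * (x + y + z)
        * (x^2 + y^2 + z^2 + x * y + y * z + x * z)) * (x + y + z)^2
      - spread x y z * (2 * (x + y + z) * (x^2 + y^2 + z^2 + x * y + y * z + x * z))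
      = -6 * (x + y + z) * ((x * y - y * z)^2 + (y * z - z * x)^2 + (z * x - x * y)^2) := by
    unfold spread; ring
  simp only [Nat.cast_ofNat, Nat.add_one_sub_one, pow_one]
  linarith [mul_nonneg (hU t ht).le hsq]

theorem monotoneOn_fAlpha_div_sum (h : IsHamiltonODESolution a b c D) (hD : Convex ℝ D)
    {α : ℝ} (hα : α ∈ Icc (1:ℝ) 5) (hord : ∀ t ∈ D, a t ≤ b t ∧ b t ≤ c t)
    (hU : ∀ t ∈ D, 0 < a t + b t + c t) :
    MonotoneOn (fun t => fAlpha α (a t) (b t) (c t) / (a t + b t + c t)) D := by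
  intro s hs t ht hst
  simp only [← fAlpha_div α _ _ _ (hU s hs), ← fAlpha_div α _ _ _ (hU t ht)]
  refine fAlpha_le_fAlpha hα ?_ (h.monotoneOn_fst_div_sum hD hord hU hs ht hst) ?_ ?_
  · rw [← add_div, ← add_div, ← add_div, ← add_div, div_self (hU s hs).ne',
      div_self (hU t ht).ne']
  · simpa only [add_div] using h.monotoneOn_fst_add_snd_div_sum hD hord hU hs ht hst
  · simpa only [spread_div] using h.antitoneOn_spread_div_sq_sum hD hU hs ht hst

end IsHamiltonODESolution

theorem stmt17_general (α : ℝ) (hα : α ∈ Set.Icc (1:ℝ) 5) (γ : ℝ) (a b c : ℝ → ℝ) (T : ℝ)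
    (ha : ∀ t ∈ Set.Ico (0:ℝ) T, HasDerivAt a ((a t)^2 + b t * c t) t)
    (hb : ∀ t ∈ Set.Ico (0:ℝ) T, HasDerivAt b ((b t)^2 + a t * c t) t)
    (hc : ∀ t ∈ Set.Ico (0:ℝ) T, HasDerivAt c ((c t)^2 + a t * b t) t)
    (hord : ∀ t ∈ Set.Ico (0:ℝ) T, a t ≤ b t ∧ b t ≤ c t)
    (hS : ∀ t ∈ Set.Ico (0:ℝ) T, 0 < 2 * (a t + b t + c t))
    (h0 : fAlpha α (a 0) (b 0) (c 0) ≥ γ * (2 * (a 0 + b 0 + c 0))) :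
    ∀ t ∈ Set.Ico (0:ℝ) T,
      fAlpha α (a t) (b t) (c t) ≥ γ * (2 * (a t + b t + c t)) := by
  intro t ht
  have h0mem : (0:ℝ) ∈ Ico 0 T := ⟨le_rfl, ht.1.trans_lt ht.2⟩
  have hU : ∀ s ∈ Ico (0:ℝ) T, 0 < a s + b s + c s := fun s hs => by linarith [hS s hs]
  have hmono := (IsHamiltonODESolution.mk ha hb hc).monotoneOn_fAlpha_div_sum (convex_Ico 0 T)
    hα hord hU h0mem ht ht.1
  have hratio₀ : 2 * γ ≤ fAlpha α (a 0) (b 0) (c 0) / (a 0 + b 0 + c 0) :=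
    (le_div_iff₀ (hU 0 h0mem)).2 (by linarith)
  have hratio := (le_div_iff₀ (hU t ht)).1 (hratio₀.trans hmono)
  linarith

theorem stmt17 (α : ℝ) (hα : α ∈ Set.Icc (1:ℝ) 5) (γ : ℝ) (a b c : ℝ → ℝ) (T : ℝ)
    (hT : 0 < T)
    (ha : ∀ t ∈ Set.Ico (0:ℝ) T, HasDerivAt a ((a t)^2 + b t * c t) t)
    (hb : ∀ t ∈ Set.Ico (0:ℝ) T, HasDerivAt b ((b t)^2 + a t * c t) t)
    (hc : ∀ t ∈ Set.Ico (0:ℝ) T, HasDerivAt c ((c t)^2 + a t * b t) t)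
    (hord : ∀ t ∈ Set.Ico (0:ℝ) T, a t ≤ b t ∧ b t ≤ c t)
    (hS : ∀ t ∈ Set.Ico (0:ℝ) T, 0 < 2 * (a t + b t + c t))
    (h0 : fAlpha α (a 0) (b 0) (c 0) ≥ γ * (2 * (a 0 + b 0 + c 0))) :
    ∀ t ∈ Set.Ico (0:ℝ) T,
      fAlpha α (a t) (b t) (c t) ≥ γ * (2 * (a t + b t + c t)) :=
  stmt17_general α hα γ a b c T ha hb hc hord hS h0
end
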